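/- Fix τ in the upper half-plane ℍ, λ ∈ {1,2,3}, a finite index set I, integers d, ℓ ≥ 1, and integers n_{α,i} (α ∈ I, 1 ≤ i ≤ d) and m_{α,j} (α ∈ I, 1 ≤ j ≤ ℓ). Suppose there is an integer s such that Σ_{j=1}^{ℓ} m_{α,j}² = s for every α ∈ I. Then the associated function L_λ satisfies L_λ(t + 2τ, τ) = exp(−4πi s (t + τ)) · L_λ(t, τ) for every t ∈ ℂ at which both sides are defined. In particular, if s = 0 then L_λ(t + 2τ, τ) = L_λ(t, τ). -/

import Mathlib

open Complex

/-- `qpow τ s = e^{2πisτ}`, i.e. "q^s" where `q = e^{2πiτ}`. -/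
noncomputable def qpow (τ s : ℂ) : ℂ := Complex.exp (2 * Real.pi * I * s * τ)

/-- `c(τ) = ∏_{r=1}^∞ (1 - q^r)`. -/
noncomputable def cInf (τ : ℂ) : ℂ := ∏' r : ℕ, (1 - qpow τ (r + 1))

/-- Jacobi theta function θ. -/
noncomputable def jTheta (v τ : ℂ) : ℂ :=
  cInf τ * qpow τ (1 / 8) * (2 * Complex.sin (Real.pi * v)) *
    ∏' r : ℕ, ((1 - qpow τ (r + 1) * Complex.exp (2 * Real.pi * I * v)) *
      (1 - qpow τ (r + 1) * Complex.exp (-(2 * Real.pi * I * v))))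

/-- Jacobi theta function θ₁. -/
noncomputable def jTheta1 (v τ : ℂ) : ℂ :=
  cInf τ * qpow τ (1 / 8) * (2 * Complex.cos (Real.pi * v)) *
    ∏' r : ℕ, ((1 + qpow τ (r + 1) * Complex.exp (2 * Real.pi * I * v)) *
      (1 + qpow τ (r + 1) * Complex.exp (-(2 * Real.pi * I * v))))

/-- Jacobi theta function θ₂. -/
noncomputable def jTheta2 (v τ : ℂ) : ℂ :=
  cInf τ *
    ∏' r : ℕ, ((1 - qpow τ ((r : ℂ) + 1 / 2) * Complex.exp (2 * Real.pi * I * v)) *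
      (1 - qpow τ ((r : ℂ) + 1 / 2) * Complex.exp (-(2 * Real.pi * I * v))))

/-- Jacobi theta function θ₃. -/
noncomputable def jTheta3 (v τ : ℂ) : ℂ :=
  cInf τ *
    ∏' r : ℕ, ((1 + qpow τ ((r : ℂ) + 1 / 2) * Complex.exp (2 * Real.pi * I * v)) *
      (1 + qpow τ ((r : ℂ) + 1 / 2) * Complex.exp (-(2 * Real.pi * I * v))))

/-- θ'(0,τ), the derivative of `v ↦ θ(v,τ)` at `v = 0`. -/
noncomputable def jThetaDeriv (τ : ℂ) : ℂ := deriv (fun v => jTheta v τ) 0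

/-- The family (θ₁, θ₂, θ₃). -/
noncomputable def thetaFam : Fin 3 → ℂ → ℂ → ℂ := ![jTheta1, jTheta2, jTheta3]

/-- The Lefschetz-number-type function L_λ. -/
noncomputable def Lfun {ι : Type*} [Fintype ι] {d ℓ : ℕ}
    (n : ι → Fin d → ℤ) (m : ι → Fin ℓ → ℤ) (lam : Fin 3) (t τ : ℂ) : ℂ :=
  ∑ α : ι,
    (∑ μ : Fin 3, ∏ i : Fin d,
        jThetaDeriv τ * thetaFam μ ((n α i : ℂ) * t) τ /
          (jTheta ((n α i : ℂ) * t) τ * thetaFam μ 0 τ)) *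
      ∏ j : Fin ℓ, thetaFam lam ((m α j : ℂ) * t) τ / thetaFam lam 0 τ

/-!
Each of `θ, θ₁, θ₂, θ₃` is an elementary factor times `tripleProd q z = ∏ (1 + z qʳ)(1 + z⁻¹ qʳ⁺¹)`
with `q = e^{2πiτ}` and `z = ±e^{2πiv}` or `z = ±q^{1/2} e^{2πiv}`. The shift `v ↦ v + τ` sends
`z ↦ z q`, and peeling off one factor on each side gives `tripleProd q (z q) = z⁻¹ tripleProd q z`,
hence `θ(v + τ) = ±e^{-πiτ - 2πiv} θ(v)`. After multiplication by `e^{πiv²/τ}` this says that the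
function is `τ`-(anti)periodic, so `θ(k(t + 2τ)) = e^{-4πik²(t + τ)} θ(kt)` for every integer `k`.
In `L_λ` this factor cancels from each quotient `θ_μ / θ`, while the product over `j` picks up
`e^{-4πi (Σⱼ m_{α,j}²)(t + τ)} = e^{-4πis(t + τ)}`.
-/

open scoped Real

section TripleProduct

variable {q : ℂ}

theorem multipliable_one_add_mul_pow (hq : ‖q‖ < 1) (w : ℂ) :
    Multipliable fun r : ℕ => 1 + w * q ^ r := by
  refine multipliable_one_add_of_summable ?_
  simpa [norm_mul, norm_pow] using
    (summable_geometric_of_lt_one (norm_nonneg q) hq).mul_left ‖w‖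

theorem multipliable_one_add_mul_pow_succ (hq : ‖q‖ < 1) (w : ℂ) :
    Multipliable fun r : ℕ => 1 + w * q ^ (r + 1) :=
  (multipliable_one_add_mul_pow hq (w * q)).congr fun r => by ring

theorem tprod_one_add_mul_pow (hq : ‖q‖ < 1) (w : ℂ) :
    ∏' r : ℕ, (1 + w * q ^ r) = (1 + w) * ∏' r : ℕ, (1 + w * q ^ (r + 1)) := by
  rw [tprod_eq_zero_mul' (f := fun r => 1 + w * q ^ r) (multipliable_one_add_mul_pow_succ hq w),
    pow_zero, mul_one]

noncomputable def tripleProd (q z : ℂ) : ℂ :=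
  ∏' r : ℕ, (1 + z * q ^ r) * (1 + z⁻¹ * q ^ (r + 1))

theorem tripleProd_eq_tprod_mul_tprod (hq : ‖q‖ < 1) (z : ℂ) :
    tripleProd q z = (∏' r : ℕ, (1 + z * q ^ r)) * ∏' r : ℕ, (1 + z⁻¹ * q ^ (r + 1)) :=
  (multipliable_one_add_mul_pow hq z).tprod_mul (multipliable_one_add_mul_pow_succ hq _)

theorem tripleProd_eq_one_add_mul (hq : ‖q‖ < 1) (z : ℂ) :
    tripleProd q z = (1 + z) * ∏' r : ℕ, (1 + z * q ^ (r + 1)) * (1 + z⁻¹ * q ^ (r + 1)) := by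
  rw [tripleProd_eq_tprod_mul_tprod hq, tprod_one_add_mul_pow hq, mul_assoc,
    (multipliable_one_add_mul_pow_succ hq z).tprod_mul (multipliable_one_add_mul_pow_succ hq _)]

theorem tripleProd_mul_right (hq : ‖q‖ < 1) (hq₀ : q ≠ 0) {z : ℂ} (hz : z ≠ 0) :
    tripleProd q (z * q) = z⁻¹ * tripleProd q z := by
  have hinv : ∀ r : ℕ, (z * q)⁻¹ * q ^ (r + 1) = z⁻¹ * q ^ r := fun r => by
    field_simp; ring
  have hshift : ∀ r : ℕ, z * q * q ^ r = z * q ^ (r + 1) := fun r => by ring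
  rw [tripleProd_eq_tprod_mul_tprod hq, tripleProd_eq_tprod_mul_tprod hq]
  simp_rw [hinv, hshift, tprod_one_add_mul_pow hq z, tprod_one_add_mul_pow hq z⁻¹]
  field_simp
  ring

end TripleProduct

section QuasiPeriodic

variable {f : ℂ → ℂ} {τ ε : ℂ}

theorem periodic_exp_mul_of_add_eq (hτ : τ ≠ 0) (hε : ε ^ 2 = 1)
    (hf : ∀ v, f (v + τ) = ε * exp (-(π * I * τ + 2 * π * I * v)) * f v) :
    Function.Periodic (fun v => exp (π * I * v ^ 2 / τ) * f v) (2 * τ) := by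
  have hstep : ∀ v,
      exp (π * I * (v + τ) ^ 2 / τ) * f (v + τ) = ε * (exp (π * I * v ^ 2 / τ) * f v) := by
    intro v
    have hexp : exp (π * I * (v + τ) ^ 2 / τ) * exp (-(π * I * τ + 2 * π * I * v)) =
        exp (π * I * v ^ 2 / τ) := by
      rw [← exp_add]; congr 1; field_simp; ring
    rw [hf]
    linear_combination ε * f v * hexp
  intro v
  beta_reduce
  rw [two_mul, ← add_assoc, hstep, hstep]
  linear_combination exp (π * I * v ^ 2 / τ) * f v * hε

theorem int_mul_add_two_mul_of_add_eq (hτ : τ ≠ 0) (hε : ε ^ 2 = 1)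
    (hf : ∀ v, f (v + τ) = ε * exp (-(π * I * τ + 2 * π * I * v)) * f v) (k : ℤ) (t : ℂ) :
    f (k * (t + 2 * τ)) = exp (-(4 * π * I * k ^ 2 * (t + τ))) * f (k * t) := by
  have hper := (periodic_exp_mul_of_add_eq hτ hε hf).int_mul k (k * t)
  rw [show (k : ℂ) * (t + 2 * τ) = k * t + k * (2 * τ) by ring]
  refine mul_left_cancel₀ (exp_ne_zero (π * I * (k * t + k * (2 * τ)) ^ 2 / τ)) ?_
  rw [hper, ← mul_assoc, ← exp_add]
  congr 2
  field_simp
  ring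

end QuasiPeriodic

theorem norm_qpow_one_lt_one {τ : ℂ} (hτ : 0 < τ.im) : ‖qpow τ 1‖ < 1 := by
  rw [qpow, norm_exp, Real.exp_lt_one_iff]
  simpa [mul_re, mul_im] using mul_pos Real.two_pi_pos hτ

theorem two_mul_cos_pi_mul (v : ℂ) :
    2 * cos (π * v) = exp (-(π * I * v)) * (1 + exp (2 * π * I * v)) := by
  rw [cos, mul_add, ← exp_add]
  ring_nf

theorem two_mul_sin_pi_mul (v : ℂ) :
    2 * sin (π * v) = I * exp (-(π * I * v)) * (1 + -exp (2 * π * I * v)) := by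
  have h : exp (-(π * I * v)) * exp (2 * π * I * v) = exp (π * v * I) := by
    rw [← exp_add]; ring_nf
  rw [sin, show -(π * v : ℂ) * I = -(π * I * v) by ring]
  linear_combination I * h

theorem jTheta3_eq_tripleProd (v τ : ℂ) :
    jTheta3 v τ = cInf τ * tripleProd (qpow τ 1) (qpow τ (1 / 2) * exp (2 * π * I * v)) := by
  unfold jTheta3 tripleProd
  congr 1
  refine tprod_congr fun r => ?_
  simp only [qpow, ← exp_nat_mul, ← exp_add, ← exp_neg]
  congr 1 <;> congr 2 <;> push_cast <;> ring

theorem jTheta2_eq_tripleProd (v τ : ℂ) :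
    jTheta2 v τ = cInf τ * tripleProd (qpow τ 1) (-(qpow τ (1 / 2) * exp (2 * π * I * v))) := by
  unfold jTheta2 tripleProd
  congr 1
  refine tprod_congr fun r => ?_
  simp only [qpow, inv_neg, neg_mul, ← sub_eq_add_neg, ← exp_nat_mul, ← exp_add, ← exp_neg]
  congr 1 <;> congr 2 <;> push_cast <;> ring

theorem jTheta1_eq_tripleProd {τ : ℂ} (hτ : 0 < τ.im) (v : ℂ) :
    jTheta1 v τ = cInf τ * qpow τ (1 / 8) * exp (-(π * I * v)) *
      tripleProd (qpow τ 1) (exp (2 * π * I * v)) := by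
  rw [tripleProd_eq_one_add_mul (norm_qpow_one_lt_one hτ), jTheta1, two_mul_cos_pi_mul]
  simp only [mul_assoc]
  congr 4
  refine tprod_congr fun r => ?_
  simp only [qpow, ← exp_nat_mul, ← exp_add, ← exp_neg]
  congr 1 <;> congr 2 <;> push_cast <;> ring

theorem jTheta_eq_tripleProd {τ : ℂ} (hτ : 0 < τ.im) (v : ℂ) :
    jTheta v τ = cInf τ * qpow τ (1 / 8) * (I * exp (-(π * I * v))) *
      tripleProd (qpow τ 1) (-exp (2 * π * I * v)) := by
  rw [tripleProd_eq_one_add_mul (norm_qpow_one_lt_one hτ), jTheta, two_mul_sin_pi_mul]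
  simp only [mul_assoc]
  congr 5
  refine tprod_congr fun r => ?_
  simp only [qpow, inv_neg, neg_mul, ← sub_eq_add_neg, ← exp_nat_mul, ← exp_add, ← exp_neg]
  congr 1 <;> congr 2 <;> push_cast <;> ring

theorem exp_two_pi_I_mul_add (v τ : ℂ) :
    exp (2 * π * I * (v + τ)) = exp (2 * π * I * v) * qpow τ 1 := by
  rw [qpow, ← exp_add]; ring_nf

theorem jTheta3_add_tau {τ : ℂ} (hτ : 0 < τ.im) (v : ℂ) :
    jTheta3 (v + τ) τ = exp (-(π * I * τ + 2 * π * I * v)) * jTheta3 v τ := by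
  rw [jTheta3_eq_tripleProd, jTheta3_eq_tripleProd, exp_two_pi_I_mul_add, ← mul_assoc,
    tripleProd_mul_right (norm_qpow_one_lt_one hτ) (exp_ne_zero _) (by simp [qpow, exp_ne_zero])]
  simp only [qpow, ← exp_add, ← exp_neg]
  ring_nf

theorem jTheta2_add_tau {τ : ℂ} (hτ : 0 < τ.im) (v : ℂ) :
    jTheta2 (v + τ) τ = -exp (-(π * I * τ + 2 * π * I * v)) * jTheta2 v τ := by
  rw [jTheta2_eq_tripleProd, jTheta2_eq_tripleProd, exp_two_pi_I_mul_add, ← mul_assoc, ← neg_mul,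
    tripleProd_mul_right (norm_qpow_one_lt_one hτ) (exp_ne_zero _) (by simp [qpow, exp_ne_zero])]
  simp only [qpow, inv_neg, ← exp_add, ← exp_neg]
  ring_nf

theorem exp_neg_pi_I_mul_add_div (v τ : ℂ) :
    exp (-(π * I * (v + τ))) / exp (2 * π * I * v) =
      exp (-(π * I * τ + 2 * π * I * v)) * exp (-(π * I * v)) := by
  rw [div_eq_mul_inv, ← exp_neg, ← exp_add, ← exp_add]; ring_nf

theorem jTheta1_add_tau {τ : ℂ} (hτ : 0 < τ.im) (v : ℂ) :
    jTheta1 (v + τ) τ = exp (-(π * I * τ + 2 * π * I * v)) * jTheta1 v τ := by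
  rw [jTheta1_eq_tripleProd hτ, jTheta1_eq_tripleProd hτ, exp_two_pi_I_mul_add,
    tripleProd_mul_right (norm_qpow_one_lt_one hτ) (exp_ne_zero _) (exp_ne_zero _)]
  linear_combination cInf τ * qpow τ (1 / 8) * tripleProd (qpow τ 1) (exp (2 * π * I * v)) *
    exp_neg_pi_I_mul_add_div v τ

theorem jTheta_add_tau {τ : ℂ} (hτ : 0 < τ.im) (v : ℂ) :
    jTheta (v + τ) τ = -exp (-(π * I * τ + 2 * π * I * v)) * jTheta v τ := by
  rw [jTheta_eq_tripleProd hτ, jTheta_eq_tripleProd hτ, exp_two_pi_I_mul_add,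
    ← neg_mul (exp (2 * π * I * v)), tripleProd_mul_right (norm_qpow_one_lt_one hτ)
      (exp_ne_zero _) (neg_ne_zero.mpr (exp_ne_zero _)), inv_neg]
  linear_combination -(cInf τ * qpow τ (1 / 8) * I * tripleProd (qpow τ 1) (-exp (2 * π * I * v))) *
    exp_neg_pi_I_mul_add_div v τ

theorem jTheta_int_mul_add_two_mul {τ : ℂ} (hτ : 0 < τ.im) (k : ℤ) (t : ℂ) :
    jTheta (k * (t + 2 * τ)) τ = exp (-(4 * π * I * k ^ 2 * (t + τ))) * jTheta (k * t) τ :=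
  int_mul_add_two_mul_of_add_eq (f := (jTheta · τ)) (ε := -1) (ne_of_apply_ne im hτ.ne')
    (by norm_num) (fun v => by rw [jTheta_add_tau hτ, neg_one_mul]) k t

theorem thetaFam_int_mul_add_two_mul {τ : ℂ} (hτ : 0 < τ.im) (μ : Fin 3) (k : ℤ) (t : ℂ) :
    thetaFam μ (k * (t + 2 * τ)) τ =
      exp (-(4 * π * I * k ^ 2 * (t + τ))) * thetaFam μ (k * t) τ := by
  have hτ₀ : τ ≠ 0 := ne_of_apply_ne im hτ.ne'
  fin_cases μ
  · exact int_mul_add_two_mul_of_add_eq (f := (jTheta1 · τ)) (ε := 1) hτ₀ (one_pow 2)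
      (fun v => by rw [jTheta1_add_tau hτ, one_mul]) k t
  · exact int_mul_add_two_mul_of_add_eq (f := (jTheta2 · τ)) (ε := -1) hτ₀ (by norm_num)
      (fun v => by rw [jTheta2_add_tau hτ, neg_one_mul]) k t
  · exact int_mul_add_two_mul_of_add_eq (f := (jTheta3 · τ)) (ε := 1) hτ₀ (one_pow 2)
      (fun v => by rw [jTheta3_add_tau hτ, one_mul]) k t

theorem thetaFam_div_jTheta_int_mul_add_two_mul {τ : ℂ} (hτ : 0 < τ.im) (μ : Fin 3) (k : ℤ)
    (c d t : ℂ) :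
    c * thetaFam μ (k * (t + 2 * τ)) τ / (jTheta (k * (t + 2 * τ)) τ * d) =
      c * thetaFam μ (k * t) τ / (jTheta (k * t) τ * d) := by
  rw [thetaFam_int_mul_add_two_mul hτ, jTheta_int_mul_add_two_mul hτ, mul_left_comm c,
    mul_assoc (exp _), mul_div_mul_left _ _ (exp_ne_zero _)]

theorem prod_thetaFam_int_mul_add_two_mul {ι : Type*} [Fintype ι] {τ : ℂ} (hτ : 0 < τ.im)
    (μ : Fin 3) (m : ι → ℤ) (c t : ℂ) :
    ∏ j, thetaFam μ (m j * (t + 2 * τ)) τ / c =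
      exp (-(4 * π * I * (∑ j, m j ^ 2 : ℤ) * (t + τ))) * ∏ j, thetaFam μ (m j * t) τ / c := by
  simp_rw [thetaFam_int_mul_add_two_mul hτ, mul_div_assoc, Finset.prod_mul_distrib,
    ← exp_sum, Finset.sum_neg_distrib]
  push_cast
  simp_rw [Finset.mul_sum, Finset.sum_mul]

theorem Lfun_periodic_two_tau_general {ι : Type*} [Fintype ι] {d ℓ : ℕ}
    (n : ι → Fin d → ℤ) (m : ι → Fin ℓ → ℤ) (lam : Fin 3)
    (τ : ℂ) (hτ : 0 < τ.im) (s : ℤ)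
    (hs : ∀ α : ι, ∑ j : Fin ℓ, (m α j) ^ 2 = s)
    (t : ℂ) :
    Lfun n m lam (t + 2 * τ) τ =
      Complex.exp (-(4 * Real.pi * I * (s : ℂ) * (t + τ))) * Lfun n m lam t τ := by
  simp only [Lfun, Finset.mul_sum, thetaFam_div_jTheta_int_mul_add_two_mul hτ,
    prod_thetaFam_int_mul_add_two_mul hτ, hs]
  exact Finset.sum_congr rfl fun α _ => by ring

/-- quasi-periodicity `L_λ(t+2τ,τ) = e^{-4πis(t+τ)} L_λ(t,τ)` when each fixed
component satisfies `Σ_j m_{α,j}² = s`. -/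
theorem Lfun_periodic_two_tau {ι : Type*} [Fintype ι] {d ℓ : ℕ} (hd : 1 ≤ d) (hl : 1 ≤ ℓ)
    (n : ι → Fin d → ℤ) (m : ι → Fin ℓ → ℤ) (lam : Fin 3)
    (τ : ℂ) (hτ : 0 < τ.im) (s : ℤ)
    (hs : ∀ α : ι, ∑ j : Fin ℓ, (m α j) ^ 2 = s)
    (t : ℂ)
    (h1 : ∀ (α : ι) (i : Fin d), jTheta ((n α i : ℂ) * t) τ ≠ 0)
    (h2 : ∀ (α : ι) (i : Fin d), jTheta ((n α i : ℂ) * (t + 2 * τ)) τ ≠ 0) :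
    Lfun n m lam (t + 2 * τ) τ =
      Complex.exp (-(4 * Real.pi * I * (s : ℂ) * (t + τ))) * Lfun n m lam t τ :=
  Lfun_periodic_two_tau_general n m lam τ hτ s hs t
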